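/- With the notation of the recurrence Λ^{-k} b̃(φ) = (1-k) b̃((1-k)φ) + k b̃(-kφ), one has for every positive integer n: Σ_{k=1}^{n} Λ^{-k} b̃(φ) = n · b̃(-nφ). -/

import Mathlib

/-!
With `A = (1/2) φ:J` one has `t • b̃(t • φ) = E(t) b`, where `E(t) = ∫₀ᵗ exp (u • A) du`
is written as the power series `∑ tʲ⁺¹/(j+1)! Aʲ`. The shift identity
`exp (s • A) E(t) = E(s + t) - E(s)` (a Cauchy product together with the binomial theorem) gives
`Λ^{-(k+1)} b̃(φ) = exp (-(k+1) • A) E(1) b = E(-k) b - E(-(k+1)) b`, so the sum telescopes to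
`-E(-n) b = n • b̃(-n • φ)`.
-/

noncomputable section

open scoped BigOperators Matrix

/-- Minkowski metric `diag(1,-1,-1,-1)` as a complex matrix. -/
def minkMetric : Matrix (Fin 4) (Fin 4) ℂ := Matrix.diagonal ![1, -1, -1, -1]

/-- The matrix of `(1/2) φ:J` acting on (raised-index) four-vectors: `x ↦ i η·φ·x`. -/
def halfPhiJ (φ : Matrix (Fin 4) (Fin 4) ℂ) : Matrix (Fin 4) (Fin 4) ℂ :=
  Complex.I • (minkMetric * φ)

/-- `b̃(φ) = Σ_{k=0}^∞ (1/(k+1)!) ((1/2)φ:J)^k (b)`. -/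
def tildeB (φ : Matrix (Fin 4) (Fin 4) ℂ) (b : Fin 4 → ℂ) : Fin 4 → ℂ :=
  ∑' k : ℕ, (((k + 1).factorial : ℂ)⁻¹) • ((halfPhiJ φ ^ k).mulVec b)

section ExpIntegral

open Nat Finset

theorem sum_antidiagonal_pow_div_factorial_mul_pow_succ {K : Type*} [Field K] [CharZero K]
    (s t : K) (m : ℕ) :
    ∑ p ∈ antidiagonal m, s ^ p.1 / p.1 ! * (t ^ (p.2 + 1) / (p.2 + 1)!) =
      ((s + t) ^ (m + 1) - s ^ (m + 1)) / (m + 1)! := by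
  rw [(Commute.all s t).add_pow', Nat.sum_antidiagonal_succ',
    eq_div_iff (Nat.cast_ne_zero.2 (factorial_ne_zero _)), sum_mul]
  simp only [Nat.choose_self, pow_zero, mul_one, one_smul, add_sub_cancel_left]
  refine sum_congr rfl fun p hp => ?_
  rw [HasAntidiagonal.mem_antidiagonal] at hp
  rw [← hp, nsmul_eq_mul, add_assoc, Nat.cast_add_choose]
  field_simp

variable {𝕂 𝔸 : Type*} [RCLike 𝕂] [NormedRing 𝔸] [NormedAlgebra 𝕂 𝔸]

/-- `∫₀ᵗ exp (u • A) du`, as a power series in `A`. -/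
def expIntegral (A : 𝔸) (t : 𝕂) : 𝔸 :=
  ∑' j : ℕ, (t ^ (j + 1) / (j + 1)! : 𝕂) • A ^ j

@[simp]
theorem expIntegral_zero (A : 𝔸) : expIntegral A (0 : 𝕂) = 0 := by
  simp [expIntegral]

theorem summable_norm_expIntegral (A : 𝔸) (t : 𝕂) :
    Summable fun j : ℕ => ‖(t ^ (j + 1) / (j + 1)! : 𝕂) • A ^ j‖ := by
  refine .of_nonneg_of_le (fun _ => norm_nonneg _) (fun j => ?_)
    ((NormedSpace.norm_expSeries_summable' (𝕂 := 𝕂) (t • A)).mul_left ‖t‖)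
  have hterm : (t ^ (j + 1) / (j + 1)! : 𝕂) • A ^ j
      = (t / (j + 1)) • ((j !⁻¹ : 𝕂) • (t • A) ^ j) := by
    rw [smul_pow, smul_smul, smul_smul, Nat.factorial_succ]
    congr 1
    push_cast
    field_simp
    ring
  rw [hterm, norm_smul]
  gcongr
  rw [norm_div, ← Nat.cast_succ, RCLike.norm_natCast]
  exact div_le_self (norm_nonneg _) (by simp)

variable [CompleteSpace 𝔸]

theorem exp_smul_mul_expIntegral (A : 𝔸) (s t : 𝕂) :
    NormedSpace.exp (s • A) * expIntegral A t = expIntegral A (s + t) - expIntegral A s := by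
  rw [NormedSpace.exp_eq_tsum 𝕂, expIntegral,
    tsum_mul_tsum_eq_tsum_sum_antidiagonal_of_summable_norm
      (NormedSpace.norm_expSeries_summable' (s • A)) (summable_norm_expIntegral A t),
    expIntegral, expIntegral, ← Summable.tsum_sub (summable_norm_expIntegral A (s + t)).of_norm
      (summable_norm_expIntegral A s).of_norm]
  refine tsum_congr fun m => ?_
  rw [← sub_smul, ← sub_div, ← sum_antidiagonal_pow_div_factorial_mul_pow_succ, sum_smul]
  refine sum_congr rfl fun p hp => ?_
  rw [HasAntidiagonal.mem_antidiagonal] at hp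
  rw [smul_pow, smul_smul, smul_mul_smul_comm, ← pow_add, hp]
  congr 1
  ring

end ExpIntegral

-- `exp` and `tsum` only see the topology, so any submultiplicative matrix norm will do.
attribute [local instance] Matrix.linftyOpNormedRing Matrix.linftyOpNormedAlgebra

theorem halfPhiJ_smul (c : ℂ) (φ : Matrix (Fin 4) (Fin 4) ℂ) :
    halfPhiJ (c • φ) = c • halfPhiJ φ := by
  rw [halfPhiJ, halfPhiJ, Matrix.mul_smul, smul_comm]

theorem smul_tildeB_smul (φ : Matrix (Fin 4) (Fin 4) ℂ) (b : Fin 4 → ℂ) (c : ℂ) :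
    c • tildeB (c • φ) b = expIntegral (halfPhiJ φ) c *ᵥ b := by
  have hmulVec : expIntegral (halfPhiJ φ) c *ᵥ b
      = ∑' j : ℕ, ((c ^ (j + 1) / (j + 1).factorial : ℂ) • halfPhiJ φ ^ j) *ᵥ b :=
    (summable_norm_expIntegral (halfPhiJ φ) c).of_norm.map_tsum
      (Matrix.mulVec.addMonoidHomLeft b) (continuous_id.matrix_mulVec continuous_const)
  rw [hmulVec, tildeB, ← tsum_const_smul'']
  refine tsum_congr fun j => ?_
  rw [halfPhiJ_smul, smul_pow, Matrix.smul_mulVec, Matrix.smul_mulVec,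
    smul_smul, smul_smul, pow_succ]
  congr 1
  field_simp

theorem stmt2_general (φ : Matrix (Fin 4) (Fin 4) ℂ) (b : Fin 4 → ℂ)
    (n : ℕ) :
    (∑ k ∈ Finset.range n,
        (NormedSpace.exp ((-((k : ℂ) + 1)) • halfPhiJ φ)).mulVec (tildeB φ b))
      = (n : ℂ) • tildeB ((-(n : ℂ)) • φ) b := by
  set E : ℕ → Fin 4 → ℂ := fun k => expIntegral (halfPhiJ φ) (-(k : ℂ)) *ᵥ b
  have hterm (k : ℕ) : NormedSpace.exp ((-((k : ℂ) + 1)) • halfPhiJ φ) *ᵥ tildeB φ b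
      = E k - E (k + 1) := by
    have htildeB := smul_tildeB_smul φ b 1
    rw [one_smul, one_smul] at htildeB
    have key :
        NormedSpace.exp ((-((k : ℂ) + 1)) • halfPhiJ φ) * expIntegral (halfPhiJ φ) (1 : ℂ) =
          expIntegral (halfPhiJ φ) (-(k : ℂ)) - expIntegral (halfPhiJ φ) (-((k : ℂ) + 1)) := by
      rw [show -(k : ℂ) = -((k : ℂ) + 1) + 1 by ring]
      exact exp_smul_mul_expIntegral _ _ _
    rw [htildeB, Matrix.mulVec_mulVec, key, Matrix.sub_mulVec]
    simp only [E, Nat.cast_succ]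
  rw [Finset.sum_congr rfl fun k _ => hterm k, Finset.sum_range_sub']
  simp only [E, Nat.cast_zero, neg_zero, expIntegral_zero, Matrix.zero_mulVec, zero_sub]
  rw [← smul_tildeB_smul, neg_smul, neg_neg]

/-- `Σ_{k=1}^{n} Λ^{-k} b̃(φ) = n · b̃(-nφ)` where `Λ = exp[(1/2)φ:J]`. -/
theorem stmt2 (φ : Matrix (Fin 4) (Fin 4) ℂ) (hφ : φᵀ = -φ) (b : Fin 4 → ℂ)
    (n : ℕ) (hn : 0 < n) :
    (∑ k ∈ Finset.range n,
        (NormedSpace.exp ((-((k : ℂ) + 1)) • halfPhiJ φ)).mulVec (tildeB φ b))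
      = (n : ℂ) • tildeB ((-(n : ℂ)) • φ) b :=
  stmt2_general φ b n
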